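/- arXiv:0804.1048 — 4 statements merged into one kernel-verified Lean document; each statement's English description precedes it below -/
import Mathlib

section
/- Let A be a unital Banach algebra over ℝ (a complete normed ring with ‖x·y‖ ≤ ‖x‖·‖y‖ and ‖1‖ = 1). Let F, V ∈ A satisfy F² = 1, F·V + V·F + V² = 0, ‖F·V‖ < 1 and ‖V·V‖ < 4. Then ∑_{n=1}^∞ ((−1)^{n+1}/n) • (F·V)ⁿ = ∑_{n=0}^∞ ((n!)²/(2n+1)!) • (F·V^{2n+1} + (1/2)•V^{2n+2}), both series converging absolutely. -/
/-!
With `X = F·V` and `Y = V²`, the conditions `F² = 1` and `F·V + V·F + V² = 0` give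
`X² + XY + Y = 0`, and this makes `X (1 - t(1-t) Y) = (1 + tX)(X + tY)` hold for every `t`.
So `(1 + tX)⁻¹ X = (X + tY)(1 - t(1-t)Y)⁻¹` for `0 ≤ t ≤ 1`, where both inverses are geometric
series since `‖tX‖ < 1` and `t(1-t)‖Y‖ ≤ ‖Y‖/4 < 1`,
with terms dominated uniformly in `t` by convergent geometric series. Integrating termwise over
`[0, 1]`, the left side gives `∫₀¹ (-t)ᵏ dt = (-1)ᵏ/(k+1)`, and the right side gives the Beta
integrals `∫₀¹ tᵏ(1-t)ᵏ dt = (k!)²/(2k+1)!` and `∫₀¹ tᵏ⁺¹(1-t)ᵏ dt`, which is half of it.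
-/

open Set MeasureTheory
open scoped Nat Interval

theorem integral_pow_mul_one_sub_pow (a b : ℕ) :
    ∫ x in (0:ℝ)..1, x ^ a * (1 - x) ^ b = (a ! * b ! : ℝ) / (a + b + 1)! := by
  have hGamma := Complex.Gamma_mul_Gamma_eq_betaIntegral
    (s := (a : ℂ) + 1) (t := (b : ℂ) + 1) (by simp; positivity) (by simp; positivity)
  have hsum : ((a : ℂ) + 1) + ((b : ℂ) + 1) = ((a + b + 1 : ℕ) : ℂ) + 1 := by push_cast; ring
  have hbeta : Complex.betaIntegral ((a : ℂ) + 1) ((b : ℂ) + 1)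
      = ((∫ x in (0:ℝ)..1, x ^ a * (1 - x) ^ b : ℝ) : ℂ) := by
    rw [Complex.betaIntegral, ← intervalIntegral.integral_ofReal]
    refine intervalIntegral.integral_congr fun x _ => ?_
    simp only [add_sub_cancel_right, Complex.cpow_natCast]
    push_cast
    ring
  rw [Complex.Gamma_nat_eq_factorial, Complex.Gamma_nat_eq_factorial, hsum,
    Complex.Gamma_nat_eq_factorial, hbeta] at hGamma
  rw [eq_div_iff (by positivity), mul_comm]
  exact_mod_cast hGamma.symm

section Interchange

variable {E : Type*} [NormedAddCommGroup E] [NormedSpace ℝ E] {a b : ℝ} {f : ℕ → ℝ → E}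
  {C : ℕ → ℝ}

theorem summable_norm_intervalIntegral_of_norm_le (hC : Summable C)
    (hf : ∀ k, ∀ t ∈ Ι a b, ‖f k t‖ ≤ C k) :
    Summable fun k => ‖∫ t in a..b, f k t‖ :=
  (hC.mul_right |b - a|).of_nonneg_of_le (fun _ => norm_nonneg _)
    fun k => intervalIntegral.norm_integral_le_of_norm_le_const (hf k)

theorem hasSum_intervalIntegral_of_norm_le {g : ℝ → E}
    (hf_meas : ∀ k, AEStronglyMeasurable (f k) (volume.restrict (Ι a b)))
    (hC : Summable C) (hf : ∀ k, ∀ t ∈ Ι a b, ‖f k t‖ ≤ C k)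
    (hg : ∀ t ∈ Ι a b, HasSum (f · t) (g t)) :
    HasSum (fun k => ∫ t in a..b, f k t) (∫ t in a..b, g t) :=
  intervalIntegral.hasSum_integral_of_dominated_convergence (fun k _ => C k) hf_meas
    (fun k => .of_forall (hf k)) (.of_forall fun _ _ => hC) intervalIntegrable_const
    (.of_forall hg)

end Interchange

section NormedRing

variable {A : Type*} [NormedRing A]

theorem norm_pow_mul_le (a b : A) (k : ℕ) : ‖a ^ k * b‖ ≤ ‖a‖ ^ k * ‖b‖ := by
  induction k with
  | zero => simp
  | succ k ih =>
    calc ‖a ^ (k + 1) * b‖ = ‖a * (a ^ k * b)‖ := by rw [pow_succ', mul_assoc]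
      _ ≤ ‖a‖ * (‖a‖ ^ k * ‖b‖) :=
        (norm_mul_le _ _).trans (mul_le_mul_of_nonneg_left ih (norm_nonneg a))
      _ = ‖a‖ ^ (k + 1) * ‖b‖ := by ring

theorem norm_mul_pow_le (a b : A) (k : ℕ) : ‖a * b ^ k‖ ≤ ‖a‖ * ‖b‖ ^ k := by
  induction k with
  | zero => simp
  | succ k ih =>
    calc ‖a * b ^ (k + 1)‖ = ‖a * b ^ k * b‖ := by rw [pow_succ, mul_assoc]
      _ ≤ ‖a‖ * ‖b‖ ^ k * ‖b‖ :=
        (norm_mul_le _ _).trans (mul_le_mul_of_nonneg_right ih (norm_nonneg b))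
      _ = ‖a‖ * ‖b‖ ^ (k + 1) := by ring

end NormedRing

section UnitInterval

variable {E : Type*} [SeminormedAddCommGroup E] [NormedSpace ℝ E] {t : ℝ}

theorem norm_smul_le_of_mem_Icc (ht : t ∈ Icc (0:ℝ) 1) (x : E) : ‖t • x‖ ≤ ‖x‖ := by
  rw [norm_smul, Real.norm_of_nonneg ht.1]
  exact mul_le_of_le_one_left (norm_nonneg x) ht.2

theorem norm_mul_one_sub_smul_le_of_mem_Icc (ht : t ∈ Icc (0:ℝ) 1) (x : E) :
    ‖(t * (1 - t)) • x‖ ≤ ‖x‖ / 4 := by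
  rw [norm_smul, Real.norm_of_nonneg (mul_nonneg ht.1 (sub_nonneg.2 ht.2))]
  nlinarith [sq_nonneg (t - 1 / 2), norm_nonneg x]

end UnitInterval

theorem mul_self_add_mul_add_eq_zero_of_flat {A : Type*} [Ring A] {F V : A} (hF : F * F = 1)
    (hflat : F * V + V * F + V * V = 0) : F * V * (F * V) + F * V * (V * V) + V * V = 0 :=
  calc F * V * (F * V) + F * V * (V * V) + V * V
      = F * (F * V + V * F + V * V) * V + (1 - F * F) * (V * V) := by noncomm_ring
    _ = 0 := by rw [hflat, hF]; simp

theorem mul_one_sub_smul_eq_one_sub_smul_mul {A : Type*} [Ring A] [Algebra ℝ A] {X Y : A}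
    (hXY : X * X + X * Y + Y = 0) (t : ℝ) :
    X * (1 - (t * (1 - t)) • Y) = (1 - (-t) • X) * (X + t • Y) := by
  rw [← sub_eq_zero]
  calc X * (1 - (t * (1 - t)) • Y) - (1 - (-t) • X) * (X + t • Y)
      = -(t • (X * X + X * Y + Y)) := by
        simp only [mul_sub, sub_mul, mul_add, smul_mul_assoc, mul_smul_comm, one_mul, mul_one,
          smul_add]
        module
    _ = 0 := by rw [hXY, smul_zero, neg_zero]

section BanachAlgebra

variable {A : Type*} [NormedRing A] [NormedAlgebra ℝ A] [CompleteSpace A]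

theorem integral_neg_smul_pow_mul (X : A) (k : ℕ) :
    ∫ t in (0:ℝ)..1, ((-t) • X) ^ k * X = ((-1 : ℝ) ^ k / (k + 1)) • X ^ (k + 1) := by
  simp only [smul_pow, smul_mul_assoc, ← pow_succ]
  rw [intervalIntegral.integral_smul_const, intervalIntegral.integral_comp_neg (fun t => t ^ k),
    integral_pow]
  congr 1
  rw [neg_zero, zero_pow k.succ_ne_zero, pow_succ]
  ring

theorem integral_add_smul_mul_smul_pow (X Y : A) (k : ℕ) :
    ∫ t in (0:ℝ)..1, (X + t • Y) * ((t * (1 - t)) • Y) ^ k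
      = ((k ! : ℝ) ^ 2 / (2 * k + 1)!) • (X * Y ^ k + (1 / 2 : ℝ) • Y ^ (k + 1)) := by
  have hexpand : ∀ t : ℝ, (X + t • Y) * ((t * (1 - t)) • Y) ^ k
      = (t ^ k * (1 - t) ^ k) • (X * Y ^ k) + (t ^ (k + 1) * (1 - t) ^ k) • Y ^ (k + 1) := by
    intro t
    rw [smul_pow, add_mul, mul_smul_comm, smul_mul_assoc, mul_smul_comm, ← pow_succ', smul_smul,
      mul_pow, pow_succ' t]
    ring_nf
  simp only [hexpand]
  rw [intervalIntegral.integral_add (by apply Continuous.intervalIntegrable; fun_prop)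
      (by apply Continuous.intervalIntegrable; fun_prop),
    intervalIntegral.integral_smul_const, intervalIntegral.integral_smul_const,
    integral_pow_mul_one_sub_pow, integral_pow_mul_one_sub_pow, smul_add, smul_smul]
  congr 2
  · rw [show k + k + 1 = 2 * k + 1 by ring]; ring
  · rw [show k + 1 + k + 1 = 2 * k + 1 + 1 by ring, Nat.factorial_succ (2 * k + 1),
      Nat.factorial_succ k]
    push_cast
    field_simp
    ring

variable {X Y : A}

theorem hasSum_neg_smul_pow_mul_of_mem_Icc (hXY : X * X + X * Y + Y = 0) (hX : ‖X‖ < 1)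
    (hY : ‖Y‖ < 4) {t : ℝ} (ht : t ∈ Icc (0:ℝ) 1) :
    HasSum (fun k => ((-t) • X) ^ k * X)
      ((X + t • Y) * Ring.inverse (1 - (t * (1 - t)) • Y)) := by
  have hx : ‖(-t) • X‖ < 1 := by
    rw [neg_smul, norm_neg]
    exact (norm_smul_le_of_mem_Icc ht X).trans_lt hX
  have hy : ‖(t * (1 - t)) • Y‖ < 1 :=
    (norm_mul_one_sub_smul_le_of_mem_Icc ht Y).trans_lt (by linarith)
  have hresolvent : Ring.inverse (1 - (-t) • X) * X
      = (X + t • Y) * Ring.inverse (1 - (t * (1 - t)) • Y) := by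
    rw [Ring.inverse_mul_eq_iff_eq_mul _ _ _ (isUnit_one_sub_of_norm_lt_one hx), ← mul_assoc,
      Ring.eq_mul_inverse_iff_mul_eq _ _ _ (isUnit_one_sub_of_norm_lt_one hy)]
    exact mul_one_sub_smul_eq_one_sub_smul_mul hXY t
  exact hresolvent ▸ (hasSum_geom_series_inverse _ hx).mul_right X

theorem log_series_eq_eta_series (hXY : X * X + X * Y + Y = 0) (hX : ‖X‖ < 1) (hY : ‖Y‖ < 4) :
    Summable (fun n : ℕ => ‖((-1 : ℝ) ^ n / (n + 1)) • X ^ (n + 1)‖) ∧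
    Summable (fun n : ℕ =>
      ‖((n ! : ℝ) ^ 2 / (2 * n + 1)!) • (X * Y ^ n + (1 / 2 : ℝ) • Y ^ (n + 1))‖) ∧
    ∑' n : ℕ, ((-1 : ℝ) ^ n / (n + 1)) • X ^ (n + 1)
      = ∑' n : ℕ, ((n ! : ℝ) ^ 2 / (2 * n + 1)!) • (X * Y ^ n + (1 / 2 : ℝ) • Y ^ (n + 1)) := by
  have hIcc : ∀ t ∈ Ι (0:ℝ) 1, t ∈ Icc (0:ℝ) 1 := by
    rw [uIoc_of_le zero_le_one]; exact fun _ ht => Ioc_subset_Icc_self ht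
  have hlog_le : ∀ k, ∀ t ∈ Ι (0:ℝ) 1, ‖((-t) • X) ^ k * X‖ ≤ ‖X‖ ^ k * ‖X‖ := by
    intro k t ht
    have hneg : ‖(-t) • X‖ ≤ ‖X‖ := by
      rw [neg_smul, norm_neg]; exact norm_smul_le_of_mem_Icc (hIcc t ht) X
    calc ‖((-t) • X) ^ k * X‖ ≤ ‖(-t) • X‖ ^ k * ‖X‖ := norm_pow_mul_le _ _ k
      _ ≤ ‖X‖ ^ k * ‖X‖ := by gcongr
  have heta_le : ∀ k, ∀ t ∈ Ι (0:ℝ) 1,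
      ‖(X + t • Y) * ((t * (1 - t)) • Y) ^ k‖ ≤ (‖X‖ + ‖Y‖) * (‖Y‖ / 4) ^ k := by
    intro k t ht
    have hadd : ‖X + t • Y‖ ≤ ‖X‖ + ‖Y‖ :=
      (norm_add_le _ _).trans (by gcongr; exact norm_smul_le_of_mem_Icc (hIcc t ht) Y)
    calc ‖(X + t • Y) * ((t * (1 - t)) • Y) ^ k‖
        ≤ ‖X + t • Y‖ * ‖(t * (1 - t)) • Y‖ ^ k := norm_mul_pow_le _ _ k
      _ ≤ (‖X‖ + ‖Y‖) * (‖Y‖ / 4) ^ k := by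
        gcongr; exact norm_mul_one_sub_smul_le_of_mem_Icc (hIcc t ht) Y
  have hlog_summable : Summable fun k : ℕ => ‖X‖ ^ k * ‖X‖ :=
    (summable_geometric_of_lt_one (norm_nonneg X) hX).mul_right _
  have heta_summable : Summable fun k : ℕ => (‖X‖ + ‖Y‖) * (‖Y‖ / 4) ^ k :=
    (summable_geometric_of_lt_one (by positivity) (by linarith)).mul_left _
  have hlog := hasSum_intervalIntegral_of_norm_le
    (fun k => (by fun_prop : Continuous _).aestronglyMeasurable) hlog_summable hlog_le
    (fun t ht => hasSum_neg_smul_pow_mul_of_mem_Icc hXY hX hY (hIcc t ht))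
  have heta := hasSum_intervalIntegral_of_norm_le
    (fun k => (by fun_prop : Continuous _).aestronglyMeasurable) heta_summable heta_le
    (fun t ht => (hasSum_geom_series_inverse _
      ((norm_mul_one_sub_smul_le_of_mem_Icc (hIcc t ht) Y).trans_lt (by linarith))).mul_left _)
  simp only [integral_neg_smul_pow_mul] at hlog
  simp only [integral_add_smul_mul_smul_pow] at heta
  refine ⟨?_, ?_, hlog.tsum_eq.trans heta.tsum_eq.symm⟩
  · simpa only [integral_neg_smul_pow_mul] using
      summable_norm_intervalIntegral_of_norm_le hlog_summable hlog_le
  · simpa only [integral_add_smul_mul_smul_pow] using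
      summable_norm_intervalIntegral_of_norm_le heta_summable heta_le

end BanachAlgebra

theorem stmt_4_general (A : Type*) [NormedRing A] [NormedAlgebra ℝ A]
    [CompleteSpace A] (F V : A) (hF : F * F = 1)
    (hflat : F * V + V * F + V * V = 0)
    (hFV : ‖F * V‖ < 1) (hVV : ‖V * V‖ < 4) :
    Summable (fun n : ℕ => ‖(((-1 : ℝ) ^ n / (n + 1)) • (F * V) ^ (n + 1) : A)‖) ∧
    Summable (fun n : ℕ =>
      ‖((((n.factorial : ℝ) ^ 2 / ((2 * n + 1).factorial : ℝ)) •
          (F * V ^ (2 * n + 1) + (1 / 2 : ℝ) • V ^ (2 * n + 2))) : A)‖) ∧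
    ∑' n : ℕ, ((-1 : ℝ) ^ n / (n + 1)) • (F * V) ^ (n + 1)
      = ∑' n : ℕ, ((n.factorial : ℝ) ^ 2 / ((2 * n + 1).factorial : ℝ)) •
          (F * V ^ (2 * n + 1) + (1 / 2 : ℝ) • V ^ (2 * n + 2)) := by
  have hodd : ∀ n : ℕ, F * V ^ (2 * n + 1) = F * V * (V * V) ^ n := fun n => by
    rw [← sq, ← pow_mul, mul_assoc, ← pow_succ']
  have heven : ∀ n : ℕ, V ^ (2 * n + 2) = (V * V) ^ (n + 1) := fun n => by
    rw [← sq, ← pow_mul, mul_add, mul_one]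
  simp only [hodd, heven]
  exact log_series_eq_eta_series (mul_self_add_mul_add_eq_zero_of_flat hF hflat) hFV hVV

/-- The power-series identity
`ln(1+FV) = Σ_{n≥0} (n!)²/(2n+1)! (F·V^{2n+1} + ½·V^{2n+2})`
for a flat pair `(F,V)` (`F² = 1`, `F·V + V·F + V² = 0`) in a unital Banach
algebra over ℝ, under the convergence assumptions `‖F·V‖ < 1` and `‖V·V‖ < 4`. -/
theorem stmt_4 (A : Type*) [NormedRing A] [NormOneClass A] [NormedAlgebra ℝ A]
    [CompleteSpace A] (F V : A) (hF : F * F = 1)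
    (hflat : F * V + V * F + V * V = 0)
    (hFV : ‖F * V‖ < 1) (hVV : ‖V * V‖ < 4) :
    Summable (fun n : ℕ => ‖(((-1 : ℝ) ^ n / (n + 1)) • (F * V) ^ (n + 1) : A)‖) ∧
    Summable (fun n : ℕ =>
      ‖((((n.factorial : ℝ) ^ 2 / ((2 * n + 1).factorial : ℝ)) •
          (F * V ^ (2 * n + 1) + (1 / 2 : ℝ) • V ^ (2 * n + 2))) : A)‖) ∧
    ∑' n : ℕ, ((-1 : ℝ) ^ n / (n + 1)) • (F * V) ^ (n + 1)
      = ∑' n : ℕ, ((n.factorial : ℝ) ^ 2 / ((2 * n + 1).factorial : ℝ)) •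
          (F * V ^ (2 * n + 1) + (1 / 2 : ℝ) • V ^ (2 * n + 2)) :=
  stmt_4_general A F V hF hflat hFV hVV
end

section
/- Fix n ∈ ℕ and natural numbers k₀, k₁, …, kₙ. The integral over the simplex Δ = {s ∈ ℝ^{n+1} : sᵢ ≥ 0 for all i, and s₀ + s₁ + ⋯ + sₙ ≤ 1} (with Lebesgue measure) of the function s ↦ ∏_{i=0}^{n} (s₀ + s₁ + ⋯ + sᵢ)^{kᵢ} equals ∏_{i=0}^{n} 1/(k₀ + k₁ + ⋯ + kᵢ + i + 1). Equivalently, ∫_Δ ∏_{i=0}^{n} (s₀+⋯+sᵢ)^{kᵢ}/kᵢ! ds = c(k₀,…,kₙ), where c(k₀,…,kₙ)⁻¹ = k₀!⋯kₙ!·(k₀+1)(k₀+k₁+2)⋯(k₀+⋯+kₙ+n+1). -/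
/-! Integrate out the last coordinate `x`. Over a point `y` of the lower-dimensional simplex, with
`σ = ∑ yᵢ`, it ranges over `[0, 1 - σ]` and the last factor contributes
`∫₀^{1-σ} (σ + x)^m dx = (1 - σ^{m+1}) / (m + 1)`. As `σ` is the last partial sum of `y`, the term
`σ^{m+1}` merges into the last exponent of the remaining monomial, so the integral is a difference
of two lower-dimensional integrals of the same kind divided by `m + 1`; the product formula obeys
the same recursion. -/

open MeasureTheory

def solidSimplex (ι : Type*) [Fintype ι] : Set (ι → ℝ) :=
  {s | (∀ i, 0 ≤ s i) ∧ ∑ i, s i ≤ 1}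

section SolidSimplex

variable (ι : Type*) [Fintype ι]

theorem isClosed_solidSimplex : IsClosed (solidSimplex ι) := by
  simp only [solidSimplex, Set.ofPred_and, Set.ofPred_forall]
  exact (isClosed_iInter fun i ↦ isClosed_le continuous_const (continuous_apply i)).inter
    (isClosed_le (by fun_prop) continuous_const)

theorem measurableSet_solidSimplex : MeasurableSet (solidSimplex ι) :=
  (isClosed_solidSimplex ι).measurableSet

theorem solidSimplex_subset_Icc : solidSimplex ι ⊆ Set.Icc 0 1 := fun _ hs ↦
  ⟨hs.1, fun i ↦ (Finset.single_le_sum (fun j _ ↦ hs.1 j) (Finset.mem_univ i)).trans hs.2⟩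

theorem isCompact_solidSimplex : IsCompact (solidSimplex ι) :=
  isCompact_Icc.of_isClosed_subset (isClosed_solidSimplex ι) (solidSimplex_subset_Icc ι)

variable {ι} in
theorem Continuous.integrableOn_solidSimplex {f : (ι → ℝ) → ℝ} (hf : Continuous f) :
    IntegrableOn f (solidSimplex ι) :=
  hf.continuousOn.integrableOn_compact (isCompact_solidSimplex ι)

end SolidSimplex

theorem snoc_mem_solidSimplex_iff {n : ℕ} (y : Fin n → ℝ) (x : ℝ) :
    (Fin.snoc y x : Fin (n + 1) → ℝ) ∈ solidSimplex (Fin (n + 1)) ↔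
      y ∈ solidSimplex (Fin n) ∧ x ∈ Set.Icc 0 (1 - ∑ i, y i) := by
  simp only [solidSimplex, Set.mem_ofPred_eq, Fin.forall_fin_succ', Fin.snoc_castSucc,
    Fin.snoc_last, Fin.sum_univ_castSucc, Set.mem_Icc]
  constructor
  · rintro ⟨⟨hy, hx⟩, hsum⟩
    exact ⟨⟨hy, by linarith⟩, hx, by linarith⟩
  · rintro ⟨⟨hy, -⟩, hx, hsum⟩
    exact ⟨⟨hy, hx⟩, by linarith⟩

theorem integral_eq_integral_integral_snoc {α E : Type*} [MeasureSpace α]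
    [SigmaFinite (volume : Measure α)] [NormedAddCommGroup E] [NormedSpace ℝ E] {n : ℕ}
    {f : (Fin (n + 1) → α) → E} (hf : Integrable f) :
    ∫ s, f s = ∫ y, ∫ x, f (Fin.snoc y x) := by
  let e := (MeasurableEquiv.piFinSuccAbove (fun _ : Fin (n + 1) ↦ α) (Fin.last n)).symm
  have he : ⇑e = fun z : α × (Fin n → α) ↦ Fin.snoc z.2 z.1 := by
    ext z
    simp [e, MeasurableEquiv.piFinSuccAbove, Fin.insertNthEquiv, Fin.insertNth_last']
  have hp : MeasurePreserving e := (volume_preserving_piFinSuccAbove _ (Fin.last n)).symm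
  rw [← hp.integral_comp e.measurableEmbedding, he]
  rw [← hp.integrable_comp_emb e.measurableEmbedding, he] at hf
  exact integral_prod_symm _ hf

theorem setIntegral_solidSimplex_succ {E : Type*} [NormedAddCommGroup E] [NormedSpace ℝ E]
    {n : ℕ} {f : (Fin (n + 1) → ℝ) → E} (hf : IntegrableOn f (solidSimplex (Fin (n + 1)))) :
    ∫ s in solidSimplex (Fin (n + 1)), f s =
      ∫ y in solidSimplex (Fin n), ∫ x in (0)..(1 - ∑ i, y i), f (Fin.snoc y x) := by
  have hind : ∀ y x, (solidSimplex (Fin (n + 1))).indicator f (Fin.snoc y x) =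
      (solidSimplex (Fin n)).indicator
        (fun y ↦ (Set.Icc 0 (1 - ∑ i, y i)).indicator (fun x ↦ f (Fin.snoc y x)) x) y := by
    intro y x
    classical
    rw [Set.indicator_apply, Set.indicator_apply, Set.indicator_apply]
    simp only [snoc_mem_solidSimplex_iff, ite_and]
  rw [← integral_indicator (measurableSet_solidSimplex _),
    integral_eq_integral_integral_snoc (hf.integrable_indicator (measurableSet_solidSimplex _)),
    ← integral_indicator (measurableSet_solidSimplex _)]
  congr 1
  ext y
  simp only [hind]
  by_cases hy : y ∈ solidSimplex (Fin n)
  · simp only [Set.indicator_of_mem hy]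
    rw [integral_indicator measurableSet_Icc, integral_Icc_eq_integral_Ioc,
      intervalIntegral.integral_of_le (sub_nonneg.2 hy.2)]
  · simp [Set.indicator_of_notMem hy]

def partialSumMonomial {n : ℕ} (k : Fin n → ℕ) (s : Fin n → ℝ) : ℝ :=
  ∏ i, (∑ j ∈ Finset.Iic i, s j) ^ k i

theorem continuous_partialSumMonomial {n : ℕ} (k : Fin n → ℕ) :
    Continuous (partialSumMonomial k) := by
  unfold partialSumMonomial
  fun_prop

theorem partialSumMonomial_snoc {n : ℕ} (k : Fin n → ℕ) (m : ℕ) (y : Fin n → ℝ) (x : ℝ) :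
    partialSumMonomial (Fin.snoc k m : Fin (n + 1) → ℕ) (Fin.snoc y x) =
      partialSumMonomial k y * (∑ i, y i + x) ^ m := by
  rw [partialSumMonomial, Fin.prod_univ_castSucc, ← Fin.top_eq_last, Finset.Iic_top,
    Fin.top_eq_last]
  simp [partialSumMonomial, Fin.sum_Iic_castSucc, Fin.sum_univ_castSucc]

theorem partialSumMonomial_snoc_mul_sum_pow {n : ℕ} (k : Fin n → ℕ) (a m : ℕ)
    (y : Fin (n + 1) → ℝ) :
    partialSumMonomial (Fin.snoc k a : Fin (n + 1) → ℕ) y * (∑ i, y i) ^ m =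
      partialSumMonomial (Fin.snoc k (a + m) : Fin (n + 1) → ℕ) y := by
  rw [← Fin.snoc_init_self y, partialSumMonomial_snoc, partialSumMonomial_snoc,
    Fin.sum_univ_castSucc]
  simp only [Fin.snoc_castSucc, Fin.snoc_last, pow_add, mul_assoc]

theorem setIntegral_partialSumMonomial_snoc {n : ℕ} (k : Fin n → ℕ) (m : ℕ) :
    ∫ s in solidSimplex (Fin (n + 1)), partialSumMonomial (Fin.snoc k m : Fin (n + 1) → ℕ) s =
      ((∫ y in solidSimplex (Fin n), partialSumMonomial k y) -
        ∫ y in solidSimplex (Fin n), partialSumMonomial k y * (∑ i, y i) ^ (m + 1)) / (m + 1) := by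
  have inner : ∀ y : Fin n → ℝ, ∫ x in (0)..(1 - ∑ i, y i),
      partialSumMonomial k y * (∑ i, y i + x) ^ m =
        (partialSumMonomial k y - partialSumMonomial k y * (∑ i, y i) ^ (m + 1)) / (m + 1) := by
    intro y
    rw [intervalIntegral.integral_const_mul,
      intervalIntegral.integral_comp_add_left (fun u ↦ u ^ m), add_zero, add_sub_cancel,
      integral_pow, one_pow]
    field_simp
  rw [setIntegral_solidSimplex_succ (continuous_partialSumMonomial _).integrableOn_solidSimplex]
  simp_rw [partialSumMonomial_snoc, inner]
  rw [integral_div]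
  congr 1
  exact integral_sub (continuous_partialSumMonomial k).integrableOn_solidSimplex
    ((continuous_partialSumMonomial k).mul (by fun_prop)).integrableOn_solidSimplex

noncomputable def simplexMoment {n : ℕ} (k : Fin n → ℕ) : ℝ :=
  ∏ i, ((∑ j ∈ Finset.Iic i, (k j : ℝ)) + (i : ℕ) + 1)⁻¹

theorem simplexMoment_snoc {n : ℕ} (k : Fin n → ℕ) (m : ℕ) :
    simplexMoment (Fin.snoc k m : Fin (n + 1) → ℕ) =
      simplexMoment k * (∑ i, (k i : ℝ) + m + n + 1)⁻¹ := by
  rw [simplexMoment, Fin.prod_univ_castSucc, ← Fin.top_eq_last, Finset.Iic_top, Fin.top_eq_last]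
  simp [simplexMoment, Fin.sum_Iic_castSucc, Fin.sum_univ_castSucc]

theorem simplexMoment_snoc_snoc {n : ℕ} (k : Fin n → ℕ) (a m : ℕ) :
    simplexMoment (Fin.snoc (Fin.snoc k a : Fin (n + 1) → ℕ) m : Fin (n + 2) → ℕ) =
      (simplexMoment (Fin.snoc k a : Fin (n + 1) → ℕ) -
        simplexMoment (Fin.snoc k (a + (m + 1)) : Fin (n + 1) → ℕ)) / (m + 1) := by
  simp only [simplexMoment_snoc, Fin.sum_univ_castSucc, Fin.snoc_castSucc, Fin.snoc_last]
  field_simp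
  push_cast
  ring

theorem setIntegral_solidSimplex_partialSumMonomial (n : ℕ) (k : Fin (n + 1) → ℕ) :
    ∫ s in solidSimplex (Fin (n + 1)), partialSumMonomial k s = simplexMoment k := by
  induction n with
  | zero =>
    rw [← Fin.snoc_init_self k, setIntegral_partialSumMonomial_snoc, simplexMoment_snoc]
    simp [partialSumMonomial, simplexMoment, solidSimplex, Measure.volume_pi_eq_dirac 0]
  | succ n ih =>
    obtain ⟨k, a, m, rfl⟩ : ∃ (k' : Fin n → ℕ) (a m : ℕ), k = Fin.snoc (Fin.snoc k' a) m :=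
      ⟨Fin.init (Fin.init k), Fin.init k (Fin.last n), k (Fin.last (n + 1)), by
        rw [Fin.snoc_init_self, Fin.snoc_init_self]⟩
    rw [setIntegral_partialSumMonomial_snoc]
    simp_rw [partialSumMonomial_snoc_mul_sum_pow]
    rw [ih, ih, simplexMoment_snoc_snoc]

/-- Simplex integral: for natural numbers `k₀,…,kₙ`,
`∫_{Δ} ∏ᵢ (s₀+⋯+sᵢ)^{kᵢ} ds = ∏ᵢ 1/(k₀+⋯+kᵢ+i+1)`, where
`Δ = {s ∈ ℝ^{n+1} : sᵢ ≥ 0, Σ sᵢ ≤ 1}`. -/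
theorem stmt_5 (n : ℕ) (k : Fin (n + 1) → ℕ) :
    ∫ s in {s : Fin (n + 1) → ℝ | (∀ i, 0 ≤ s i) ∧ ∑ i, s i ≤ 1},
        (∏ i, (∑ j ∈ Finset.Iic i, s j) ^ (k i))
      = ∏ i : Fin (n + 1), ((∑ j ∈ Finset.Iic i, (k j : ℝ)) + (i : ℕ) + 1)⁻¹ :=
  setIntegral_solidSimplex_partialSumMonomial n k
end

section
/- Let λ > 0 and α > 0 be real numbers and m ∈ ℕ. Then 2·∫₀^∞ ( ∫₀^∞ t^{α−1}·u^{m}·e^{−(u+tλ)²} du ) dt = λ^{−α} · Γ((α+m+1)/2) · ∑_{l=0}^{m} (−1)^l · binom(m,l) / (α+l), where Γ is the Gamma function and binom(m,l) is the binomial coefficient. -/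
/-!
Scaling `t ↦ t / λ` pulls out the factor `λ ^ (-α)`. After the shift `s = u + x` and the binomial
expansion of `(s - x) ^ m`, the inner integral becomes
`∑ l, C(m, l) (-x) ^ l ∫_x^∞ s ^ (m - l) e^{-s²} ds`. Integrating by parts,
`∫₀^∞ x ^ (β - 1) ∫_x^∞ f = β⁻¹ ∫₀^∞ x ^ β f`, which for `f s = s ^ k e^{-s²}` equals
`Γ((β + k + 1) / 2) / (2β)`; with `β = α + l` and `k = m - l` all the Gamma factors coincide.
-/

open MeasureTheory Real Set Filter Topology

section TailIntegral

variable {f : ℝ → ℝ}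

theorem Continuous.integrableOn_Ioi_of_integrableOn_Ioi (hf : Continuous f) {a : ℝ}
    (hi : IntegrableOn f (Ioi a)) (c : ℝ) : IntegrableOn f (Ioi c) := by
  refine ((hf.integrableOn_Icc (a := c) (b := a)).union hi).mono_set fun x hx => ?_
  by_cases hxa : x ≤ a
  · exact Or.inl ⟨le_of_lt hx, hxa⟩
  · exact Or.inr (not_le.mp hxa)

theorem hasDerivAt_integral_Ioi (hf : Continuous f) {a : ℝ} (hi : IntegrableOn f (Ioi a))
    (c : ℝ) : HasDerivAt (fun b => ∫ x in Ioi b, f x) (-f c) c := by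
  have hsplit : (fun b => ∫ x in Ioi b, f x)
      = fun b => (∫ x in Ioi a, f x) - ∫ x in a..b, f x := by
    funext b
    rw [← intervalIntegral.integral_Ioi_sub_Ioi' hi
      (hf.integrableOn_Ioi_of_integrableOn_Ioi hi b), sub_sub_cancel]
  rw [hsplit]
  exact (hf.integral_hasStrictDerivAt a c).hasDerivAt.const_sub _

theorem continuous_integral_Ioi (hf : Continuous f) {a : ℝ} (hi : IntegrableOn f (Ioi a)) :
    Continuous fun b => ∫ x in Ioi b, f x :=
  continuous_iff_continuousAt.mpr fun c => (hasDerivAt_integral_Ioi hf hi c).continuousAt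

theorem integral_comp_add_right_Ioi (a c : ℝ) :
    ∫ x in Ioi a, f (x + c) = ∫ x in Ioi (a + c), f x := by
  simpa using (measurePreserving_add_right (volume : Measure ℝ) c).setIntegral_preimage_emb
    (measurableEmbedding_addRight c) f (Ioi (a + c))

theorem integral_rpow_mul_comp_mul_right_Ioi (s : ℝ) {b : ℝ} (hb : 0 < b) :
    ∫ t in Ioi 0, t ^ (s - 1) * f (t * b) = b ^ (-s) * ∫ x in Ioi 0, x ^ (s - 1) * f x := by
  have hscale : ∀ t ∈ Ioi (0 : ℝ), t ^ (s - 1) * f (t * b)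
      = b ^ (1 - s) * ((t * b) ^ (s - 1) * f (t * b)) := by
    intro t ht
    rw [mul_rpow (le_of_lt ht) hb.le, ← mul_assoc, ← mul_assoc, mul_comm (b ^ (1 - s)),
      mul_assoc (t ^ (s - 1)), ← rpow_add hb]
    simp
  rw [setIntegral_congr_fun measurableSet_Ioi hscale, integral_const_mul,
    integral_comp_mul_right_Ioi (fun x => x ^ (s - 1) * f x) 0 hb, zero_mul, smul_eq_mul,
    ← mul_assoc, ← rpow_neg_one, ← rpow_add hb]
  ring_nf

variable {β : ℝ}

theorem tendsto_rpow_mul_integral_Ioi_atTop (hβ : 0 ≤ β) (hf : ∀ x, 0 ≤ x → 0 ≤ f x)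
    (hi : IntegrableOn f (Ioi 0)) (hiβ : IntegrableOn (fun x => x ^ β * f x) (Ioi 0)) :
    Tendsto (fun t => t ^ β * ∫ x in Ioi t, f x) atTop (𝓝 0) := by
  refine squeeze_zero' (g := fun t => ∫ x in Ioi t, x ^ β * f x) ?_ ?_
    (tendsto_integral_Ioi_zero (μ := volume) tendsto_id)
  · filter_upwards [eventually_ge_atTop 0] with t ht
    exact mul_nonneg (rpow_nonneg ht β) (setIntegral_nonneg measurableSet_Ioi
      fun x hx => hf x (ht.trans (le_of_lt hx)))
  · filter_upwards [eventually_ge_atTop 0] with t ht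
    rw [← integral_const_mul]
    refine setIntegral_mono_on ((hi.mono_set (Ioi_subset_Ioi ht)).const_mul _)
      (hiβ.mono_set (Ioi_subset_Ioi ht)) measurableSet_Ioi fun x hx => ?_
    exact mul_le_mul_of_nonneg_right (rpow_le_rpow ht (le_of_lt hx) hβ)
      (hf x (ht.trans (le_of_lt hx)))

theorem integral_rpow_mul_integral_Ioi (hβ : 0 < β) (hfc : Continuous f)
    (hf : ∀ x, 0 ≤ x → 0 ≤ f x) (hi : IntegrableOn f (Ioi 0))
    (hiβ : IntegrableOn (fun x => x ^ β * f x) (Ioi 0)) :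
    IntegrableOn (fun t => t ^ (β - 1) * ∫ x in Ioi t, f x) (Ioi 0) ∧
      ∫ t in Ioi 0, t ^ (β - 1) * ∫ x in Ioi t, f x = (∫ x in Ioi 0, x ^ β * f x) / β := by
  -- the integrand is the nonnegative derivative of `g / β`, which tends to `0`: hence integrable
  set g : ℝ → ℝ := fun t => (t ^ β * ∫ x in Ioi t, f x) - ∫ x in Ioi t, x ^ β * f x
  have hcβ : Continuous fun x : ℝ => x ^ β * f x := (continuous_rpow_const hβ.le).mul hfc
  have hcont : ContinuousWithinAt (fun t => g t / β) (Ici 0) 0 := by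
    refine (((continuous_rpow_const hβ.le).mul (continuous_integral_Ioi hfc hi)).sub
      (continuous_integral_Ioi hcβ hiβ)).div_const β |>.continuousWithinAt
  have hderiv : ∀ t ∈ Ioi (0 : ℝ),
      HasDerivAt (fun t => g t / β) (t ^ (β - 1) * ∫ x in Ioi t, f x) t := by
    intro t ht
    refine ((((hasDerivAt_rpow_const (p := β) (Or.inl (ne_of_gt ht))).mul
      (hasDerivAt_integral_Ioi hfc hi t)).sub
        (hasDerivAt_integral_Ioi hcβ hiβ t)).div_const β).congr_deriv ?_
    field_simp
    ring
  have hpos : ∀ t ∈ Ioi (0 : ℝ), 0 ≤ t ^ (β - 1) * ∫ x in Ioi t, f x := fun t ht =>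
    mul_nonneg (rpow_nonneg (le_of_lt ht) _) (setIntegral_nonneg measurableSet_Ioi
      fun x hx => hf x (le_of_lt (lt_trans ht hx)))
  have htop : Tendsto (fun t => g t / β) atTop (𝓝 0) := by
    simpa using ((tendsto_rpow_mul_integral_Ioi_atTop hβ.le hf hi hiβ).sub
      (tendsto_integral_Ioi_zero tendsto_id)).div_const β
  refine ⟨integrableOn_Ioi_deriv_of_nonneg hcont hderiv hpos htop, ?_⟩
  rw [integral_Ioi_of_hasDerivAt_of_nonneg hcont hderiv hpos htop]
  simp [g, zero_rpow hβ.ne', neg_div]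

end TailIntegral

theorem integrableOn_pow_mul_exp_neg_sq (k : ℕ) (c : ℝ) :
    IntegrableOn (fun x : ℝ => x ^ k * exp (-x ^ 2)) (Ioi c) := by
  refine Continuous.integrableOn_Ioi_of_integrableOn_Ioi (a := 0) (by fun_prop) ?_ c
  simpa using integrableOn_rpow_mul_exp_neg_mul_sq one_pos (s := k)
    (by linarith [k.cast_nonneg (α := ℝ)])

theorem integral_rpow_mul_integral_Ioi_pow_mul_exp_neg_sq {β : ℝ} (hβ : 0 < β) (k : ℕ) :
    IntegrableOn (fun t => t ^ (β - 1) * ∫ x in Ioi t, x ^ k * exp (-x ^ 2)) (Ioi 0) ∧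
      ∫ t in Ioi 0, t ^ (β - 1) * ∫ x in Ioi t, x ^ k * exp (-x ^ 2)
        = Gamma ((β + k + 1) / 2) / (2 * β) := by
  have hexp : -1 < β + k := by linarith [k.cast_nonneg (α := ℝ)]
  have hmerge : ∀ x ∈ Ioi (0 : ℝ),
      x ^ β * (x ^ k * exp (-x ^ 2)) = x ^ (β + k) * exp (-x ^ (2 : ℝ)) := fun x hx => by
    rw [rpow_add hx, rpow_natCast, rpow_two, mul_assoc]
  have hiβ : IntegrableOn (fun x : ℝ => x ^ β * (x ^ k * exp (-x ^ 2))) (Ioi 0) :=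
    (integrableOn_rpow_mul_exp_neg_rpow hexp two_pos).congr_fun
      (fun x hx => (hmerge x hx).symm) measurableSet_Ioi
  obtain ⟨hint, heq⟩ := integral_rpow_mul_integral_Ioi hβ (by fun_prop)
    (fun x _ => by positivity) (integrableOn_pow_mul_exp_neg_sq k 0) hiβ
  refine ⟨hint, ?_⟩
  rw [heq, setIntegral_congr_fun measurableSet_Ioi hmerge,
    integral_rpow_mul_exp_neg_rpow two_pos hexp]
  field_simp

theorem integral_Ioi_pow_mul_exp_neg_add_sq (m : ℕ) (c : ℝ) :
    ∫ u in Ioi 0, u ^ m * exp (-(u + c) ^ 2)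
      = ∑ l ∈ Finset.range (m + 1),
          (-c) ^ l * m.choose l * ∫ x in Ioi c, x ^ (m - l) * exp (-x ^ 2) := by
  have hbinom : ∀ x : ℝ, (x - c) ^ m * exp (-x ^ 2) = ∑ l ∈ Finset.range (m + 1),
      (-c) ^ l * m.choose l * (x ^ (m - l) * exp (-x ^ 2)) := fun x => by
    rw [sub_eq_neg_add, add_pow, Finset.sum_mul]
    exact Finset.sum_congr rfl fun l _ => by ring
  have hshift := integral_comp_add_right_Ioi (f := fun x => (x - c) ^ m * exp (-x ^ 2)) 0 c
  simp only [add_sub_cancel_right, zero_add] at hshift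
  rw [hshift, setIntegral_congr_fun measurableSet_Ioi fun x _ => hbinom x,
    integral_finsetSum _ fun l _ => (integrableOn_pow_mul_exp_neg_sq _ c).const_mul _]
  simp only [integral_const_mul]

theorem integral_rpow_mul_integral_Ioi_pow_mul_exp_neg_add_sq {α : ℝ} (hα : 0 < α) (m : ℕ) :
    2 * ∫ x in Ioi 0, x ^ (α - 1) * ∫ u in Ioi 0, u ^ m * exp (-(u + x) ^ 2)
      = Gamma ((α + m + 1) / 2) *
          ∑ l ∈ Finset.range (m + 1), (-1 : ℝ) ^ l * m.choose l / (α + l) := by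
  have hαl (l : ℕ) : 0 < α + l := by positivity
  have hexpand : ∀ x ∈ Ioi (0 : ℝ), x ^ (α - 1) * ∫ u in Ioi 0, u ^ m * exp (-(u + x) ^ 2)
      = ∑ l ∈ Finset.range (m + 1), (-1) ^ l * m.choose l *
          (x ^ (α + l - 1) * ∫ y in Ioi x, y ^ (m - l) * exp (-y ^ 2)) := by
    intro x hx
    rw [integral_Ioi_pow_mul_exp_neg_add_sq, Finset.mul_sum]
    refine Finset.sum_congr rfl fun l _ => ?_
    rw [add_sub_right_comm, rpow_add hx, rpow_natCast, neg_pow]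
    ring
  rw [setIntegral_congr_fun measurableSet_Ioi hexpand, integral_finsetSum _ fun l _ =>
      (integral_rpow_mul_integral_Ioi_pow_mul_exp_neg_sq (hαl l) _).1.const_mul _,
    Finset.mul_sum, Finset.mul_sum]
  refine Finset.sum_congr rfl fun l hl => ?_
  rw [integral_const_mul, (integral_rpow_mul_integral_Ioi_pow_mul_exp_neg_sq (hαl l) _).2,
    Nat.cast_sub (Finset.mem_range_succ_iff.mp hl), show α + l + (m - l) + 1 = α + m + 1 by ring]
  field_simp

/-- For `λ, α > 0` and `m ∈ ℕ`:
`2·∫₀^∞ ∫₀^∞ t^{α−1} u^m e^{−(u+tλ)²} du dt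
  = λ^{−α} Γ((α+m+1)/2) Σ_{l=0}^m (−1)^l C(m,l)/(α+l)`. -/
theorem stmt_6 (lam α : ℝ) (hlam : 0 < lam) (hα : 0 < α) (m : ℕ) :
    2 * ∫ t in Set.Ioi (0 : ℝ),
        (∫ u in Set.Ioi (0 : ℝ), t ^ (α - 1) * u ^ m * Real.exp (-(u + t * lam) ^ 2))
      = lam ^ (-α) * Real.Gamma ((α + m + 1) / 2) *
          ∑ l ∈ Finset.range (m + 1), (-1 : ℝ) ^ l * (m.choose l : ℝ) / (α + l) := by
  simp_rw [mul_assoc (_ ^ (α - 1)), integral_const_mul]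
  rw [integral_rpow_mul_comp_mul_right_Ioi
      (f := fun x => ∫ u in Ioi 0, u ^ m * exp (-(u + x) ^ 2)) α hlam, mul_left_comm,
    integral_rpow_mul_integral_Ioi_pow_mul_exp_neg_add_sq hα, mul_assoc]
end

section
/- Let f : ℝ → ℂ be continuous on (0,∞). Let N ≥ 1, let c₀ < c₁ < ⋯ < c_N be real numbers, a₀, …, a_{N−1} ∈ ℂ, and C, δ > 0 be such that ‖f(t)‖ ≤ C·e^{−δt} for all t ≥ 1 and ‖f(t) − ∑_{i=0}^{N−1} aᵢ·t^{cᵢ}‖ ≤ C·t^{c_N} for all 0 < t ≤ 1. Then there exists a function F : ℂ → ℂ such that: (i) for every z with Re z > −c₀, the integral ∫₀^∞ t^{z−1} f(t) dt converges absolutely and equals F(z); and (ii) the function z ↦ F(z) − ∑_{i=0}^{N−1} aᵢ/(z + cᵢ) is differentiable (holomorphic) on the half-plane {z : Re z > −c_N}. In particular F is meromorphic on that half-plane with at most simple poles at z = −cᵢ, with residue aᵢ at −cᵢ. -/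
/-!
Split `f` on `(0, ∞)` as `1_{(0,1]} (f - p) + 1_{(1,∞)} f + 1_{(0,1]} p`, where
`p t = ∑ aᵢ t^{cᵢ}`. The first piece is `O(t^{c_N})` at `0` and vanishes beyond `1`, so its
Mellin transform is holomorphic on `Re z > -c_N`; the second vanishes near `0` and decays
exponentially, so its Mellin transform is entire; and the Mellin transform of `1_{(0,1]} t^{cᵢ}`
is `1 / (z + cᵢ)`.
-/

open MeasureTheory Set Filter Asymptotics
open scoped Topology

theorem MeasureTheory.LocallyIntegrableOn.indicator {X E : Type*} [MeasurableSpace X]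
    [TopologicalSpace X] [NormedAddCommGroup E] {μ : Measure X} {f : X → E} {U s : Set X}
    (hf : LocallyIntegrableOn f U μ) (hs : MeasurableSet s) :
    LocallyIntegrableOn (s.indicator f) U μ := fun x hx =>
  let ⟨V, hV, hfV⟩ := hf x hx
  ⟨V, hV, hfV.indicator hs⟩

section IndicatorEventually

variable {M : Type*} [Zero M]

theorem indicator_Ioc_eventuallyEq_zero_atTop (f : ℝ → M) :
    (Ioc 0 1).indicator f =ᶠ[atTop] 0 := by
  filter_upwards [eventually_gt_atTop 1] with t ht
  exact indicator_of_notMem (fun h => h.2.not_gt ht) f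

theorem indicator_Ioc_eventuallyEq_nhdsGT (f : ℝ → M) :
    (Ioc 0 1).indicator f =ᶠ[𝓝[>] 0] f := by
  filter_upwards [Ioc_mem_nhdsGT zero_lt_one] with t ht
  exact indicator_of_mem ht f

theorem indicator_Ioi_eventuallyEq_zero_nhdsGT (f : ℝ → M) :
    (Ioi 1).indicator f =ᶠ[𝓝[>] 0] 0 := by
  filter_upwards [Ioc_mem_nhdsGT zero_lt_one] with t ht
  exact indicator_of_notMem (fun h => ht.2.not_gt h) f

theorem indicator_Ioi_eventuallyEq_atTop (f : ℝ → M) :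
    (Ioi 1).indicator f =ᶠ[atTop] f := by
  filter_upwards [eventually_gt_atTop 1] with t ht
  exact indicator_of_mem ht f

theorem eqOn_indicator_Ioc_sub_add_indicator_Ioi_add_indicator_Ioc {G : Type*} [AddCommGroup G]
    (f p : ℝ → G) :
    EqOn (fun t => (Ioc 0 1).indicator (f - p) t + (Ioi 1).indicator f t + (Ioc 0 1).indicator p t)
      f (Ioi 0) := fun t ht => by
  by_cases h1 : t ≤ 1
  · simp [indicator_of_mem (show t ∈ Ioc 0 1 from ⟨ht, h1⟩), not_lt.2 h1]
  · simp [indicator_of_mem (show t ∈ Ioi 1 from not_le.1 h1), h1]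

end IndicatorEventually

section Mellin

variable {E : Type*} [NormedAddCommGroup E] [NormedSpace ℂ E]

theorem HasMellin.add {f g : ℝ → E} {s : ℂ} {m n : E} (hf : HasMellin f s m)
    (hg : HasMellin g s n) : HasMellin (fun t => f t + g t) s (m + n) := by
  rw [← hf.2, ← hg.2]
  exact hasMellin_add hf.1 hg.1

theorem hasMellin_sum {ι : Type*} (u : Finset ι) {f : ι → ℝ → E} {m : ι → E} {s : ℂ}
    (h : ∀ i ∈ u, HasMellin (f i) s (m i)) :
    HasMellin (fun t => ∑ i ∈ u, f i t) s (∑ i ∈ u, m i) := by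
  classical
  induction u using Finset.induction_on with
  | empty => simp [HasMellin, MellinConvergent, mellin]
  | insert i u hi ih =>
    simp only [Finset.sum_insert hi]
    exact (h i (u.mem_insert_self i)).add (ih fun j hj => h j (Finset.mem_insert_of_mem hj))

theorem HasMellin.congr_Ioi {f g : ℝ → E} {s : ℂ} {m : E} (hf : HasMellin f s m)
    (hfg : EqOn f g (Ioi 0)) : HasMellin g s m := by
  have hint : EqOn (fun t : ℝ => (t : ℂ) ^ (s - 1) • f t)
      (fun t : ℝ => (t : ℂ) ^ (s - 1) • g t) (Ioi 0) := fun t ht =>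
    congrArg ((t : ℂ) ^ (s - 1) • ·) (hfg ht)
  exact ⟨(integrableOn_congr_fun hint measurableSet_Ioi).1 hf.1,
    (setIntegral_congr_fun measurableSet_Ioi hint).symm.trans hf.2⟩

theorem mellinConvergent_indicator_Ioc {f : ℝ → E} {b : ℝ} {s : ℂ}
    (hf : LocallyIntegrableOn f (Ioi 0)) (hf_bot : f =O[𝓝[>] 0] fun t => t ^ b)
    (hs : -b < s.re) : MellinConvergent ((Ioc 0 1).indicator f) s :=
  mellinConvergent_of_isBigO_rpow (hf.indicator measurableSet_Ioc)
    ((indicator_Ioc_eventuallyEq_zero_atTop f).trans_isBigO (isBigO_zero _ _))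
    (lt_add_one s.re)
    ((indicator_Ioc_eventuallyEq_nhdsGT f).trans_isBigO (by simpa only [neg_neg] using hf_bot)) hs

theorem mellin_indicator_Ioc_differentiableAt {f : ℝ → E} {b : ℝ} {s : ℂ}
    (hf : LocallyIntegrableOn f (Ioi 0)) (hf_bot : f =O[𝓝[>] 0] fun t => t ^ b)
    (hs : -b < s.re) :
    DifferentiableAt ℂ (mellin ((Ioc 0 1).indicator f)) s :=
  mellin_differentiableAt_of_isBigO_rpow (hf.indicator measurableSet_Ioc)
    ((indicator_Ioc_eventuallyEq_zero_atTop f).trans_isBigO (isBigO_zero _ _))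
    (lt_add_one s.re)
    ((indicator_Ioc_eventuallyEq_nhdsGT f).trans_isBigO (by simpa only [neg_neg] using hf_bot)) hs

theorem mellinConvergent_indicator_Ioi {f : ℝ → E} {δ : ℝ} (hδ : 0 < δ)
    (hf : LocallyIntegrableOn f (Ioi 0)) (hf_top : f =O[atTop] fun t => Real.exp (-δ * t))
    (s : ℂ) : MellinConvergent ((Ioi 1).indicator f) s :=
  mellinConvergent_of_isBigO_rpow_exp hδ (hf.indicator measurableSet_Ioi)
    ((indicator_Ioi_eventuallyEq_atTop f).trans_isBigO hf_top)
    ((indicator_Ioi_eventuallyEq_zero_nhdsGT f).trans_isBigO (isBigO_zero _ _))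
    (sub_one_lt s.re)

theorem differentiable_mellin_indicator_Ioi {f : ℝ → E} {δ : ℝ} (hδ : 0 < δ)
    (hf : LocallyIntegrableOn f (Ioi 0)) (hf_top : f =O[atTop] fun t => Real.exp (-δ * t)) :
    Differentiable ℂ (mellin ((Ioi 1).indicator f)) :=
  fun s => mellin_differentiableAt_of_isBigO_rpow_exp hδ (hf.indicator measurableSet_Ioi)
    ((indicator_Ioi_eventuallyEq_atTop f).trans_isBigO hf_top)
    ((indicator_Ioi_eventuallyEq_zero_nhdsGT f).trans_isBigO (isBigO_zero _ _))
    (sub_one_lt s.re)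

end Mellin

theorem continuousOn_sum_mul_ofReal_cpow {ι : Type*} (u : Finset ι) (a c : ι → ℂ) :
    ContinuousOn (fun t : ℝ => ∑ i ∈ u, a i * (t : ℂ) ^ c i) (Ioi 0) :=
  continuousOn_finsetSum _ fun _ _ => continuousOn_const.mul
    (continuousOn_of_forall_continuousAt fun _ ht =>
      Complex.continuousAt_ofReal_cpow_const _ _ (Or.inr (ne_of_gt ht)))

theorem hasMellin_indicator_Ioc_sum_cpow {ι : Type*} (u : Finset ι) (a c : ι → ℂ) {s : ℂ}
    (hs : ∀ i ∈ u, 0 < s.re + (c i).re) :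
    HasMellin ((Ioc 0 1).indicator fun t : ℝ => ∑ i ∈ u, a i * (t : ℂ) ^ c i) s
      (∑ i ∈ u, a i / (s + c i)) := by
  have hterm : ∀ i ∈ u, HasMellin (fun t => a i • (Ioc 0 1).indicator
      (fun t : ℝ => (t : ℂ) ^ c i) t) s (a i / (s + c i)) := fun i hi => by
    have h := hasMellin_cpow_Ioc (c i) (hs i hi)
    have h' := hasMellin_const_smul h.1 (a i)
    rwa [h.2, smul_eq_mul, mul_one_div] at h'
  convert hasMellin_sum u hterm using 1
  ext t
  by_cases ht : t ∈ Ioc 0 1 <;> simp [ht]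

theorem stmt_12_general (f : ℝ → ℂ) (hf : ContinuousOn f (Set.Ioi 0)) (N : ℕ)
    (c : Fin (N + 1) → ℝ) (hc : StrictMono c) (a : Fin N → ℂ)
    (C δ : ℝ) (hδ : 0 < δ)
    (hdecay : ∀ t : ℝ, 1 ≤ t → ‖f t‖ ≤ C * Real.exp (-δ * t))
    (hasym : ∀ t : ℝ, 0 < t → t ≤ 1 →
      ‖f t - ∑ i : Fin N, a i * (t : ℂ) ^ (c i.castSucc : ℂ)‖ ≤ C * t ^ (c (Fin.last N))) :
    ∃ F : ℂ → ℂ,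
      (∀ z : ℂ, -c 0 < z.re →
        IntegrableOn (fun t : ℝ => (t : ℂ) ^ (z - 1) * f t) (Set.Ioi 0) ∧
        ∫ t in Set.Ioi (0 : ℝ), (t : ℂ) ^ (z - 1) * f t = F z) ∧
      DifferentiableOn ℂ
        (fun z : ℂ => F z - ∑ i : Fin N, a i / (z + (c i.castSucc : ℂ)))
        {z : ℂ | -c (Fin.last N) < z.re} := by
  set p : ℝ → ℂ := fun t => ∑ i : Fin N, a i * (t : ℂ) ^ (c i.castSucc : ℂ)
  set g := (Ioc 0 1).indicator (f - p)
  set k := (Ioi 1).indicator f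
  have hc0 (i : Fin (N + 1)) : c 0 ≤ c i := hc.monotone (Fin.zero_le i)
  have hfloc : LocallyIntegrableOn f (Ioi 0) := hf.locallyIntegrableOn measurableSet_Ioi
  have hgloc : LocallyIntegrableOn (f - p) (Ioi 0) :=
    hfloc.sub ((continuousOn_sum_mul_ofReal_cpow _ _ _).locallyIntegrableOn measurableSet_Ioi)
  have hg_bot : (f - p) =O[𝓝[>] 0] fun t => t ^ c (Fin.last N) := .of_bound C <| by
    filter_upwards [Ioc_mem_nhdsGT zero_lt_one] with t ht
    rw [Real.norm_of_nonneg (Real.rpow_nonneg ht.1.le _)]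
    exact hasym t ht.1 ht.2
  have hf_top : f =O[atTop] fun t => Real.exp (-δ * t) := .of_bound C <| by
    filter_upwards [eventually_ge_atTop 1] with t ht
    rw [Real.norm_of_nonneg (Real.exp_pos _).le]
    exact hdecay t ht
  refine ⟨fun z => mellin g z + mellin k z + ∑ i : Fin N, a i / (z + (c i.castSucc : ℂ)),
    fun z hz => ?_, fun z hz => ?_⟩
  · have hg : HasMellin g z (mellin g z) :=
      ⟨mellinConvergent_indicator_Ioc hgloc hg_bot (by linarith [hc0 (Fin.last N)]), rfl⟩
    have hk : HasMellin k z (mellin k z) :=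
      ⟨mellinConvergent_indicator_Ioi hδ hfloc hf_top z, rfl⟩
    have hP := hasMellin_indicator_Ioc_sum_cpow Finset.univ a (fun i => (c i.castSucc : ℂ))
      (s := z) fun i _ => by simp only [Complex.ofReal_re]; linarith [hc0 i.castSucc]
    exact ((hg.add hk).add hP).congr_Ioi
      (eqOn_indicator_Ioc_sub_add_indicator_Ioi_add_indicator_Ioc f p)
  · simp only [add_sub_cancel_right]
    exact ((mellin_indicator_Ioc_differentiableAt hgloc hg_bot hz).add
      (differentiable_mellin_indicator_Ioi hδ hfloc hf_top z)).differentiableWithinAt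

/-- Meromorphic continuation of the Mellin transform of a function with short-time
asymptotic expansion `f(t) ≈ Σᵢ aᵢ t^{cᵢ}` and exponential decay at infinity:
the Mellin transform `F(z) = ∫₀^∞ t^{z−1} f(t) dt` converges for `Re z > −c₀` and
`F(z) − Σᵢ aᵢ/(z+cᵢ)` extends holomorphically to `Re z > −c_N`. -/
theorem stmt_12 (f : ℝ → ℂ) (hf : ContinuousOn f (Set.Ioi 0)) (N : ℕ) (hN : 1 ≤ N)
    (c : Fin (N + 1) → ℝ) (hc : StrictMono c) (a : Fin N → ℂ)
    (C δ : ℝ) (hC : 0 < C) (hδ : 0 < δ)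
    (hdecay : ∀ t : ℝ, 1 ≤ t → ‖f t‖ ≤ C * Real.exp (-δ * t))
    (hasym : ∀ t : ℝ, 0 < t → t ≤ 1 →
      ‖f t - ∑ i : Fin N, a i * (t : ℂ) ^ (c i.castSucc : ℂ)‖ ≤ C * t ^ (c (Fin.last N))) :
    ∃ F : ℂ → ℂ,
      (∀ z : ℂ, -c 0 < z.re →
        IntegrableOn (fun t : ℝ => (t : ℂ) ^ (z - 1) * f t) (Set.Ioi 0) ∧
        ∫ t in Set.Ioi (0 : ℝ), (t : ℂ) ^ (z - 1) * f t = F z) ∧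
      DifferentiableOn ℂ
        (fun z : ℂ => F z - ∑ i : Fin N, a i / (z + (c i.castSucc : ℂ)))
        {z : ℂ | -c (Fin.last N) < z.re} :=
  stmt_12_general f hf N c hc a C δ hδ hdecay hasym
end
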